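/- arXiv:1811.04882 — 2 statements merged into one kernel-verified Lean document; each statement's English description precedes it below -/
import Mathlib

section
/- (Generalized Stone–Weierstraß, Riesz version) Let I be a Riesz ideal of C(X, ℝ) and R a strictly point-separating and nowhere-vanishing Riesz subspace of I. Then the I-closure of R is all of I. -/
variable {X : Type*} [TopologicalSpace X]

def IsRieszIdeal (I : Set C(X, ℝ)) : Prop :=
  (0 : C(X, ℝ)) ∈ I ∧ (∀ f g : C(X, ℝ), f ∈ I → g ∈ I → f + g ∈ I) ∧
    (∀ (c : ℝ) (f : C(X, ℝ)), f ∈ I → c • f ∈ I) ∧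
    (∀ f g : C(X, ℝ), g ∈ I → (∀ x, |f x| ≤ |g x|) → f ∈ I)

/-- A decreasing sequence of continuous functions with pointwise infimum `0`. -/
def DecrPtwInfZero (f : ℕ → C(X, ℝ)) : Prop :=
  (∀ k, f (k + 1) ≤ f k) ∧ ∀ x, IsGLB (Set.range fun k => f k x) 0

/-- The sequence `g` is strictly `I`-convergent to `g'`. -/
def StrictConvTo (I : Set C(X, ℝ)) (g : ℕ → C(X, ℝ)) (g' : C(X, ℝ)) : Prop :=
  ∃ f : ℕ → C(X, ℝ), (∀ k, f k ∈ I) ∧ DecrPtwInfZero f ∧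
    ∀ k, ∃ N, ∀ n ≥ N, ∀ x, |g' x - g n x| ≤ f k x

/-- The sequence `g` is a strict `I`-Cauchy sequence. -/
def StrictCauchy (I : Set C(X, ℝ)) (g : ℕ → C(X, ℝ)) : Prop :=
  ∃ f : ℕ → C(X, ℝ), (∀ k, f k ∈ I) ∧ DecrPtwInfZero f ∧
    ∀ k, ∃ N, ∀ n ≥ N, ∀ x, |g n x - g N x| ≤ f k x

def IClosed (I : Set C(X, ℝ)) (S : Set C(X, ℝ)) : Prop :=
  ∀ (g : ℕ → C(X, ℝ)) (g' : C(X, ℝ)), (∀ n, g n ∈ S) → StrictConvTo I g g' → g' ∈ S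

def IClosure (I : Set C(X, ℝ)) (S : Set C(X, ℝ)) : Set C(X, ℝ) :=
  ⋂₀ {C | C ⊆ I ∧ S ⊆ C ∧ IClosed I C}

/-!
A Riesz ideal `I` is itself `I`-closed, so it suffices to show that every `I`-closed `C ⊇ R`
contains `I`. As `X` is σ-compact, `R` contains an increasing sequence `pₖ ≥ 0` tending to `∞`
pointwise, and for `h ∈ I` the truncations of `h` at level `pₖ` converge strictly to `h`, with
regulators `(|h| - pₖ)⁺ ≤ |h|`. It remains to see that `C` contains every `u` with `|u| ≤ p ∈ R`.
By Kakutani–Stone on compact sets, `u` is a locally uniform limit of elements of `R`; truncated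
at `p` they stay in `R` and their errors are dominated by `2p ∈ I`. Cutoff functions along a
compact exhaustion turn locally uniform convergence with dominated errors into strict
`I`-convergence.
-/

open Filter Set Topology

lemma sigmaCompactSpace_of_weaklyLocallyCompact_lindelof [WeaklyLocallyCompactSpace X]
    [LindelofSpace X] : SigmaCompactSpace X := by
  choose K hKc hxK using fun x : X => exists_compact_mem_nhds x
  obtain ⟨s, hsc, hsU⟩ := countable_cover_nhds hxK
  refine SigmaCompactSpace.of_countable _ (hsc.image K) (forall_mem_image.2 fun x _ => hKc x) ?_
  rwa [sUnion_image]

section Clip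

variable {α : Type*}

def clip [Lattice α] [Neg α] (b a : α) : α := a ⊓ b ⊔ -b

variable [AddCommGroup α] [LinearOrder α] [IsOrderedAddMonoid α] {a a' b : α}

lemma clip_eq_self (h : |a| ≤ b) : clip b a = a := by
  rw [abs_le] at h
  rw [clip, inf_eq_left.2 h.2, sup_eq_left.2 h.1]

lemma abs_clip_le (hb : 0 ≤ b) : |clip b a| ≤ b :=
  abs_le.2 ⟨le_sup_right, sup_le inf_le_right (neg_le_self hb)⟩

lemma abs_clip_sub_clip_le : |clip b a - clip b a'| ≤ |a - a'| :=
  (abs_max_sub_max_le_abs _ _ _).trans <| (abs_min_sub_min_le_max _ _ _ _).trans <| by simp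

lemma abs_sub_clip_le : |a - clip b a| ≤ max (|a| - b) 0 := by
  unfold clip
  grind [abs_le]

end Clip

@[simp]
lemma ContinuousMap.clip_apply (b f : C(X, ℝ)) (x : X) : clip b f x = clip (b x) (f x) := rfl

section RieszSubspace

variable {𝕜 E : Type*} [DivisionRing 𝕜] [NeZero (2 : 𝕜)] [Lattice E] [AddCommGroup E]
  [Module 𝕜 E] [IsOrderedAddMonoid E] {R : Submodule 𝕜 E} {f g : E}

lemma sup_mem_of_abs_mem (habs : ∀ f ∈ R, |f| ∈ R) (hf : f ∈ R) (hg : g ∈ R) : f ⊔ g ∈ R := by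
  rw [sup_eq_half_smul_add_add_abs_sub' 𝕜]
  exact R.smul_mem _ (R.add_mem (R.add_mem hf hg) (habs _ (R.sub_mem hg hf)))

lemma inf_mem_of_abs_mem (habs : ∀ f ∈ R, |f| ∈ R) (hf : f ∈ R) (hg : g ∈ R) : f ⊓ g ∈ R := by
  rw [inf_eq_half_smul_add_sub_abs_sub' 𝕜]
  exact R.smul_mem _ (R.sub_mem (R.add_mem hf hg) (habs _ (R.sub_mem hg hf)))

lemma clip_mem_of_abs_mem (habs : ∀ f ∈ R, |f| ∈ R) (hf : f ∈ R) (hg : g ∈ R) : clip g f ∈ R :=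
  sup_mem_of_abs_mem habs (inf_mem_of_abs_mem habs hf hg) (R.neg_mem hg)

end RieszSubspace

def StrictlySeparatesPoints (S : Set C(X, ℝ)) : Prop :=
  ∀ x y : X, x ≠ y → ∃ s ∈ S, s x ≠ 0 ∧ s y = 0

def NowhereVanishing (S : Set C(X, ℝ)) : Prop :=
  ∀ x : X, ∃ s ∈ S, s x ≠ 0

lemma Submodule.separatesPointsStrongly {R : Submodule ℝ C(X, ℝ)}
    (hsep : StrictlySeparatesPoints (R : Set C(X, ℝ))) (hnv : NowhereVanishing (R : Set C(X, ℝ))) :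
    (R : Set C(X, ℝ)).SeparatesPointsStrongly := by
  intro v x y
  rcases eq_or_ne x y with rfl | hxy
  · obtain ⟨s, hs, hsx⟩ := hnv x
    exact ⟨(v x / s x) • s, R.smul_mem _ hs, by simp [hsx], by simp [hsx]⟩
  · obtain ⟨s, hs, hsx, hsy⟩ := hsep x y hxy
    obtain ⟨t, ht, hty, htx⟩ := hsep y x hxy.symm
    exact ⟨(v x / s x) • s + (v y / t y) • t, R.add_mem (R.smul_mem _ hs) (R.smul_mem _ ht),
      by simp [hsx, htx], by simp [hsy, hty]⟩

lemma exists_forall_abs_sub_lt_of_isCompact {L : Set C(X, ℝ)} (hne : L.Nonempty)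
    (inf_mem : ∀ f ∈ L, ∀ g ∈ L, f ⊓ g ∈ L) (sup_mem : ∀ f ∈ L, ∀ g ∈ L, f ⊔ g ∈ L)
    (sep : L.SeparatesPointsStrongly) {K : Set X} (hK : IsCompact K) (h : C(X, ℝ)) {ε : ℝ}
    (hε : 0 < ε) : ∃ g ∈ L, ∀ x ∈ K, |h x - g x| < ε := by
  have : CompactSpace K := isCompact_iff_compactSpace.1 hK
  set L' := (fun f : C(X, ℝ) => f.restrict K) '' L
  have hL' : closure L' = ⊤ := by
    refine ContinuousMap.sublattice_closure_eq_top L' (hne.image _) ?_ ?_ ?_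
    · rintro _ ⟨f, hf, rfl⟩ _ ⟨g, hg, rfl⟩
      exact ⟨f ⊓ g, inf_mem f hf g hg, rfl⟩
    · rintro _ ⟨f, hf, rfl⟩ _ ⟨g, hg, rfl⟩
      exact ⟨f ⊔ g, sup_mem f hf g hg, rfl⟩
    · intro v x y
      obtain ⟨f, hf, hfx, hfy⟩ := sep (Function.extend Subtype.val v 0) x y
      exact ⟨f.restrict K, ⟨f, hf, rfl⟩, by simpa [Subtype.val_injective.extend_apply] using hfx,
        by simpa [Subtype.val_injective.extend_apply] using hfy⟩
  obtain ⟨_, ⟨g, hg, rfl⟩, hgh⟩ :=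
    Metric.mem_closure_iff.1 (hL' ▸ trivial : h.restrict K ∈ closure L') ε hε
  exact ⟨g, hg, fun x hx => by
    simpa [Real.dist_eq] using (ContinuousMap.dist_lt_iff hε).1 hgh ⟨x, hx⟩⟩

lemma Submodule.exists_forall_abs_sub_lt_of_isCompact {R : Submodule ℝ C(X, ℝ)}
    (habs : ∀ f ∈ R, |f| ∈ R) (hR : (R : Set C(X, ℝ)).SeparatesPointsStrongly) {K : Set X}
    (hK : IsCompact K) (h : C(X, ℝ)) {ε : ℝ} (hε : 0 < ε) : ∃ g ∈ R, ∀ x ∈ K, |h x - g x| < ε :=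
  _root_.exists_forall_abs_sub_lt_of_isCompact ⟨0, R.zero_mem⟩
    (fun _ hf _ hg => inf_mem_of_abs_mem habs hf hg)
    (fun _ hf _ hg => sup_mem_of_abs_mem habs hf hg) hR hK h hε

lemma Submodule.exists_monotone_tendsto_atTop (K : CompactExhaustion X)
    {R : Submodule ℝ C(X, ℝ)} (habs : ∀ f ∈ R, |f| ∈ R)
    (hR : (R : Set C(X, ℝ)).SeparatesPointsStrongly) :
    ∃ p : ℕ → C(X, ℝ), (∀ k, p k ∈ R) ∧ (∀ k, 0 ≤ p k) ∧ Monotone p ∧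
      ∀ x, Tendsto (fun k => p k x) atTop atTop := by
  have hψ : ∀ j : ℕ, ∃ g ∈ R, ∀ x ∈ K j, |((j : ℝ) + 1) - g x| < 1 := fun j =>
    R.exists_forall_abs_sub_lt_of_isCompact habs hR (K.isCompact j) (.const X ((j : ℝ) + 1))
      one_pos
  choose ψ hψR hψ using hψ
  refine ⟨fun k => ∑ j ∈ Finset.range (k + 1), |ψ j|,
    fun k => R.sum_mem fun j _ => habs _ (hψR j),
    fun k x => by simpa using Finset.sum_nonneg fun j _ => abs_nonneg (ψ j x),
    fun k l hkl x => by
      simpa using Finset.sum_le_sum_of_subset_of_nonneg (Finset.range_subset_range.2 (by omega))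
        fun j _ _ => abs_nonneg (ψ j x),
    fun x => ?_⟩
  obtain ⟨m, hm⟩ := K.exists_mem x
  refine tendsto_atTop_mono' _ ?_ tendsto_natCast_atTop_atTop
  filter_upwards [eventually_ge_atTop m] with k hk
  have hkψ : (k : ℝ) ≤ |ψ k x| := by
    have := hψ k x (K.subset hk hm)
    rw [abs_lt] at this
    exact (by linarith : (k : ℝ) ≤ ψ k x).trans (le_abs_self _)
  simpa using hkψ.trans (Finset.single_le_sum (fun j _ => abs_nonneg (ψ j x))
    (Finset.self_mem_range_succ k))

lemma CompactExhaustion.exists_monotone_cutoff [RegularSpace X] [LocallyCompactSpace X]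
    (K : CompactExhaustion X) :
    ∃ χ : ℕ → C(X, ℝ), Monotone χ ∧ (∀ n x, χ n x ∈ Icc 0 1) ∧ (∀ n, EqOn (χ n) 1 (K n)) ∧
      ∀ n, EqOn (χ n) 0 (interior (K (n + 1)))ᶜ := by
  have hχ : ∀ n, ∃ χ : C(X, ℝ), EqOn χ 0 (interior (K (n + 1)))ᶜ ∧ EqOn χ 1 (K n) ∧
      ∀ x, χ x ∈ Icc (0 : ℝ) 1 := fun n =>
    exists_continuous_zero_one_of_isCompact' (K.isCompact n) isOpen_interior.isClosed_compl
      (disjoint_compl_right_iff_subset.2 (K.subset_interior_succ n))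
  choose χ hχ0 hχ1 hχI using hχ
  refine ⟨χ, monotone_nat_of_le_succ fun n x => ?_, hχI, hχ1, hχ0⟩
  by_cases hx : x ∈ interior (K (n + 1))
  · simpa [hχ1 (n + 1) (interior_subset hx)] using (hχI n x).2
  · simpa [hχ0 n hx] using (hχI (n + 1) x).1

lemma decrPtwInfZero_of_tendsto {f : ℕ → C(X, ℝ)} (hf : ∀ k, f (k + 1) ≤ f k)
    (h0 : ∀ x, Tendsto (fun k => f k x) atTop (𝓝 0)) : DecrPtwInfZero f :=
  ⟨hf, fun x => isGLB_of_tendsto_atTop (antitone_nat_of_succ_le fun k => hf k x) (h0 x)⟩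

lemma CompactExhaustion.exists_decrPtwInfZero_majorant [RegularSpace X] [LocallyCompactSpace X]
    (K : CompactExhaustion X) {q : C(X, ℝ)} (hq : 0 ≤ q) :
    ∃ f : ℕ → C(X, ℝ), DecrPtwInfZero f ∧ (∀ k, 0 ≤ f k ∧ f k ≤ q) ∧
      ∀ k x (e : ℝ), e ≤ q x → (x ∈ K (k + 1) → e ≤ 2⁻¹ ^ k) → e ≤ f k x := by
  obtain ⟨χ, hχ, hχI, hχ1, hχ0⟩ := K.exists_monotone_cutoff
  -- `f k` is `min q 2⁻¹ ^ k` on `K k` and `q` off `K (k + 1)`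
  set f : ℕ → C(X, ℝ) := fun k => q ⊓ .const X (2⁻¹ ^ k) ⊔ q * (1 - χ k)
  have hf : ∀ k x, f k x = max (min (q x) (2⁻¹ ^ k)) (q x * (1 - χ k x)) := fun _ _ => rfl
  have hf0 : ∀ k x, 0 ≤ f k x := fun k x => by
    rw [hf]
    exact le_max_of_le_left (le_min (hq x) (by positivity))
  have hpow : Antitone fun k : ℕ => (2⁻¹ : ℝ) ^ k := pow_right_anti₀ (by norm_num) (by norm_num)
  refine ⟨f,
    decrPtwInfZero_of_tendsto (fun k => ContinuousMap.le_def.2 fun x => ?_) (fun x => ?_),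
    fun k => ⟨ContinuousMap.le_def.2 (hf0 k), ContinuousMap.le_def.2 fun x => ?_⟩,
    fun k x e heq hek => ?_⟩
  · rw [hf, hf]
    exact max_le_max (min_le_min_left _ (hpow k.le_succ))
      (mul_le_mul_of_nonneg_left (sub_le_sub_left (hχ k.le_succ x) 1) (hq x))
  · obtain ⟨m, hm⟩ := K.exists_mem x
    refine squeeze_zero' (Eventually.of_forall fun k => hf0 k x) ?_
      (tendsto_pow_atTop_nhds_zero_of_lt_one (by norm_num : (0 : ℝ) ≤ 2⁻¹) (by norm_num))
    filter_upwards [eventually_ge_atTop m] with k hk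
    rw [hf, hχ1 k (K.subset hk hm)]
    simp
  · rw [hf]
    exact max_le (min_le_left _ _) (mul_le_of_le_one_right (hq x) (by linarith [(hχI k x).1]))
  · rw [hf]
    by_cases hx : x ∈ interior (K (k + 1))
    · exact le_max_of_le_left (le_min heq (hek (interior_subset hx)))
    · simpa [hχ0 k hx] using heq

lemma IsRieszIdeal.iClosed {I : Set C(X, ℝ)} (hI : IsRieszIdeal I) : IClosed I I := by
  rintro g h hg ⟨f, hfI, hf, hconv⟩
  obtain ⟨N, hN⟩ := hconv 0
  refine hI.2.2.2 h (f 0 + |g N|) (hI.2.1 _ _ (hfI 0) (hI.2.2.2 _ _ (hg N) fun x => by simp))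
    fun x => ?_
  have hf0 : 0 ≤ f 0 x := (hf.2 x).1 ⟨0, rfl⟩
  rw [ContinuousMap.add_apply, ContinuousMap.abs_apply,
    abs_of_nonneg (add_nonneg hf0 (abs_nonneg _))]
  linarith [abs_sub_abs_le_abs_sub (h x) (g N x), hN N le_rfl x]

lemma strictConvTo_of_tendstoUniformlyOn [RegularSpace X] [LocallyCompactSpace X]
    (K : CompactExhaustion X) {I : Set C(X, ℝ)} (hI : IsRieszIdeal I) {q : C(X, ℝ)} (hq : q ∈ I)
    {g : ℕ → C(X, ℝ)} {h : C(X, ℝ)} (hgq : ∀ n x, |h x - g n x| ≤ q x)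
    (hgh : ∀ m, TendstoUniformlyOn (fun n => ⇑(g n)) h atTop (K m)) : StrictConvTo I g h := by
  obtain ⟨f, hf, hfq, hmaj⟩ :=
    K.exists_decrPtwInfZero_majorant (q := q) fun x => (abs_nonneg _).trans (hgq 0 x)
  refine ⟨f, fun k => hI.2.2.2 _ _ hq fun x => ?_, hf, fun k => ?_⟩
  · have h0 := ContinuousMap.le_def.1 (hfq k).1 x
    have h1 := ContinuousMap.le_def.1 (hfq k).2 x
    rw [abs_of_nonneg h0, abs_of_nonneg (h0.trans h1)]
    exact h1
  · obtain ⟨N, hN⟩ := eventually_atTop.1 <|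
      Metric.tendstoUniformlyOn_iff.1 (hgh (k + 1)) (2⁻¹ ^ k) (by positivity)
    exact ⟨N, fun n hn x => hmaj k x _ (hgq n x) fun hx => (hN n hn x hx).le⟩

lemma strictConvTo_clip {I : Set C(X, ℝ)} (hI : IsRieszIdeal I) {h : C(X, ℝ)} (hh : h ∈ I)
    {p : ℕ → C(X, ℝ)} (hp0 : ∀ k, 0 ≤ p k) (hp : Monotone p)
    (hp_top : ∀ x, Tendsto (fun k => p k x) atTop atTop) :
    StrictConvTo I (fun n => clip (p n) h) h := by
  set f : ℕ → C(X, ℝ) := fun k => (|h| - p k) ⊔ 0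
  have hf : ∀ k x, f k x = max (|h x| - p k x) 0 := fun _ _ => rfl
  refine ⟨f, fun k => hI.2.2.2 _ _ hh fun x => ?_,
    decrPtwInfZero_of_tendsto (fun k => ContinuousMap.le_def.2 fun x => ?_) fun x => ?_,
    fun k => ⟨k, fun n hn x => ?_⟩⟩
  · rw [hf, abs_of_nonneg (le_max_right _ _)]
    exact max_le (sub_le_self _ (ContinuousMap.le_def.1 (hp0 k) x)) (abs_nonneg _)
  · rw [hf, hf]
    exact max_le_max_right 0 (sub_le_sub_left (hp k.le_succ x) _)
  · refine tendsto_const_nhds.congr' ?_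
    filter_upwards [(hp_top x).eventually_ge_atTop |h x|] with k hk
    rw [hf, max_eq_right (by linarith)]
  · rw [ContinuousMap.clip_apply, hf]
    exact abs_sub_clip_le.trans (max_le_max_right 0 (sub_le_sub_left (hp hn x) _))

lemma IClosed.mem_of_abs_le [RegularSpace X] [LocallyCompactSpace X] (K : CompactExhaustion X)
    {I : Set C(X, ℝ)} (hI : IsRieszIdeal I) {R : Submodule ℝ C(X, ℝ)} (habs : ∀ f ∈ R, |f| ∈ R)
    (hR : (R : Set C(X, ℝ)).SeparatesPointsStrongly) (hRI : (R : Set C(X, ℝ)) ⊆ I)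
    {C : Set C(X, ℝ)} (hRC : (R : Set C(X, ℝ)) ⊆ C) (hC : IClosed I C) {p u : C(X, ℝ)}
    (hp : p ∈ R) (hu : ∀ x, |u x| ≤ p x) : u ∈ C := by
  choose g hgR hg using fun n : ℕ =>
    R.exists_forall_abs_sub_lt_of_isCompact habs hR (K.isCompact n) u
      (Nat.one_div_pos_of_nat (n := n))
  have hclip : ∀ n x, |u x - clip p (g n) x| ≤ |u x - g n x| := fun n x => by
    simpa [clip_eq_self (hu x)] using abs_clip_sub_clip_le (b := p x) (a := u x) (a' := g n x)
  refine hC _ u (fun n => hRC (clip_mem_of_abs_mem habs (hgR n) hp))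
    (strictConvTo_of_tendstoUniformlyOn K hI (hI.2.2.1 2 p (hRI hp)) (fun n x => ?_) fun m => ?_)
  · have hpx : 0 ≤ p x := (abs_nonneg _).trans (hu x)
    calc |u x - clip p (g n) x| ≤ |u x| + |clip (p x) (g n x)| := abs_sub _ _
      _ ≤ p x + p x := add_le_add (hu x) (abs_clip_le hpx)
      _ = ((2 : ℝ) • p) x := by simp [two_mul]
  · refine Metric.tendstoUniformlyOn_iff.2 fun ε hε => ?_
    obtain ⟨N, hN⟩ := exists_nat_one_div_lt hε
    filter_upwards [eventually_ge_atTop (max m N)] with n hn x hx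
    rw [Real.dist_eq]
    calc |u x - clip p (g n) x| ≤ |u x - g n x| := hclip n x
      _ < 1 / (n + 1) := hg n x (K.subset (le_of_max_le_left hn) hx)
      _ ≤ 1 / (N + 1) := by gcongr; exact le_of_max_le_right hn
      _ < ε := hN

theorem stone_weierstrass_riesz_ideal
    (X : Type*) [TopologicalSpace X] [LocallyCompactSpace X] [T2Space X] [LindelofSpace X]
    (I : Set C(X, ℝ)) (hI : IsRieszIdeal I)
    (R : Set C(X, ℝ)) (hRI : R ⊆ I)
    (hzero : (0 : C(X, ℝ)) ∈ R)
    (hadd : ∀ f g : C(X, ℝ), f ∈ R → g ∈ R → f + g ∈ R)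
    (hsmul : ∀ (c : ℝ) (f : C(X, ℝ)), f ∈ R → c • f ∈ R)
    (habs : ∀ f : C(X, ℝ), f ∈ R → |f| ∈ R)
    (hsep : ∀ x y : X, x ≠ y → ∃ s ∈ R, s x ≠ 0 ∧ s y = 0)
    (hnv : ∀ x : X, ∃ s ∈ R, s x ≠ 0) :
    IClosure I R = I := by
  have : SigmaCompactSpace X := sigmaCompactSpace_of_weaklyLocallyCompact_lindelof
  let K := CompactExhaustion.choice X
  let R' : Submodule ℝ C(X, ℝ) :=
    { carrier := R, add_mem' := hadd _ _, zero_mem' := hzero, smul_mem' := hsmul }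
  have hR' : (R' : Set C(X, ℝ)).SeparatesPointsStrongly := R'.separatesPointsStrongly hsep hnv
  obtain ⟨p, hpR, hp0, hp, hp_top⟩ := R'.exists_monotone_tendsto_atTop K habs hR'
  refine Subset.antisymm (sInter_subset_of_mem ⟨subset_rfl, hRI, hI.iClosed⟩) fun h hh => ?_
  rintro C ⟨-, hRC, hC⟩
  refine hC _ h (fun n => ?_) (strictConvTo_clip hI hh hp0 hp hp_top)
  exact hC.mem_of_abs_le K hI habs hR' hRI hRC (hpR n) fun x =>
    abs_clip_le (ContinuousMap.le_def.1 (hp0 n) x)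
end

section
/- (Automatic continuity) Let I be a Riesz ideal and unital subalgebra of C(X, ℝ) containing a nonnegative proper function. Then every positive linear map Φ : I → V into an Archimedean ordered vector space V is strictly I-continuous: for every decreasing sequence (f_k) in I with pointwise infimum 0, the infimum of (Φ(f_k)) in V is 0. -/
/-! With `w = 1 + p * f 0`, for every `ε > 0` some `f N ≤ ε • w`: on the compact set
`{p ≤ 1/ε}` this is Dini's theorem, and off it `f N ≤ f 0 < ε * p * f 0`. Positivity of `Φ`
then gives `0 ≤ Φ (f N) ≤ ε • Φ w`, and the Archimedean property of `V` forces the infimum of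
`Φ (f k)` to be `0`. -/

variable {X : Type*} [TopologicalSpace X]

open Filter Topology

namespace IsRieszIdeal

variable {I : Set C(X, ℝ)} (hI : IsRieszIdeal I) {f g : C(X, ℝ)}
include hI

lemma add_mem (hf : f ∈ I) (hg : g ∈ I) : f + g ∈ I := hI.2.1 f g hf hg

lemma smul_mem (c : ℝ) (hf : f ∈ I) : c • f ∈ I := hI.2.2.1 c f hf

lemma sub_mem (hf : f ∈ I) (hg : g ∈ I) : f - g ∈ I := by
  simpa [sub_eq_add_neg] using hI.add_mem hf (hI.smul_mem (-1) hg)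

end IsRieszIdeal

lemma monotoneOn_of_map_add_of_map_nonneg {V : Type*} [AddCommGroup V] [PartialOrder V]
    [IsOrderedAddMonoid V] {I : Set C(X, ℝ)} (hI : IsRieszIdeal I) {Φ : C(X, ℝ) → V}
    (hΦadd : ∀ f g : C(X, ℝ), f ∈ I → g ∈ I → Φ (f + g) = Φ f + Φ g)
    (hΦpos : ∀ f : C(X, ℝ), f ∈ I → 0 ≤ f → 0 ≤ Φ f) :
    MonotoneOn Φ I := by
  intro f hf g hg hfg
  have hgf : g - f ∈ I := hI.sub_mem hg hf
  calc Φ f ≤ Φ f + Φ (g - f) := le_add_of_nonneg_right (hΦpos _ hgf (sub_nonneg.mpr hfg))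
    _ = Φ g := by rw [← hΦadd f _ hf hgf, add_sub_cancel]

namespace DecrPtwInfZero

variable {f : ℕ → C(X, ℝ)} (hf : DecrPtwInfZero f)
include hf

lemma antitone : Antitone f := antitone_nat_of_succ_le hf.1

lemma nonneg (k : ℕ) : 0 ≤ f k := fun x => (hf.2 x).1 ⟨k, rfl⟩

lemma tendstoUniformlyOn {K : Set X} (hK : IsCompact K) :
    TendstoUniformlyOn (fun k x => f k x) 0 atTop K :=
  Antitone.tendstoUniformlyOn_of_forall_tendsto hK (fun k => (f k).continuous.continuousOn)
    (fun x _ _ _ hkl => hf.antitone hkl x) continuousOn_const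
    (fun x _ => tendsto_atTop_isGLB (fun _ _ hkl => hf.antitone hkl x) (hf.2 x))

lemma exists_forall_lt_of_isCompact {K : Set X} (hK : IsCompact K) {ε : ℝ} (hε : 0 < ε) :
    ∃ N, ∀ x ∈ K, f N x < ε := by
  obtain ⟨N, hN⟩ := (Metric.tendstoUniformlyOn_iff.mp (hf.tendstoUniformlyOn hK) ε hε).exists
  refine ⟨N, fun x hx => ?_⟩
  have hdist := hN x hx
  rw [Pi.zero_apply, dist_zero_left, Real.norm_eq_abs] at hdist
  exact (le_abs_self _).trans_lt hdist

lemma exists_le_smul_one_add_mul {p : C(X, ℝ)} (hp0 : 0 ≤ p)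
    (hproper : ∀ a b : ℝ, a ≤ b → IsCompact (p ⁻¹' Set.Icc a b)) {ε : ℝ} (hε : 0 < ε) :
    ∃ N, f N ≤ ε • (1 + p * f 0) := by
  obtain ⟨N, hN⟩ := hf.exists_forall_lt_of_isCompact (hproper 0 ε⁻¹ (by positivity)) hε
  refine ⟨N, ContinuousMap.le_def.mpr fun x => ?_⟩
  have hpx : 0 ≤ p x := hp0 x
  have hf0x : 0 ≤ f 0 x := hf.nonneg 0 x
  simp only [ContinuousMap.smul_apply, ContinuousMap.add_apply, ContinuousMap.mul_apply,
    ContinuousMap.one_apply, smul_eq_mul]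
  by_cases hpε : p x ≤ ε⁻¹
  · nlinarith [hN x ⟨hpx, hpε⟩, mul_nonneg (mul_nonneg hε.le hpx) hf0x]
  · have hεp : 1 < ε * p x := (inv_lt_iff_one_lt_mul₀' hε).mp (not_le.mp hpε)
    have hfN : f N x ≤ f 0 x := ContinuousMap.le_def.mp (hf.antitone (Nat.zero_le N)) x
    nlinarith [mul_le_mul_of_nonneg_right hεp.le hf0x]

end DecrPtwInfZero

lemma isGLB_range_zero_of_forall_le_smul {V : Type*} [AddCommGroup V] [PartialOrder V]
    [Module ℝ V] (harch : ∀ v w : V, 0 ≤ w → (∀ ε : ℝ, 0 < ε → v ≤ ε • w) → v ≤ 0)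
    {v : ℕ → V} {w : V} (hw : 0 ≤ w) (hv0 : ∀ k, 0 ≤ v k)
    (hv : ∀ ε : ℝ, 0 < ε → ∃ N, v N ≤ ε • w) :
    IsGLB (Set.range v) 0 := by
  refine ⟨Set.forall_mem_range.mpr hv0, fun u hu => harch u w hw fun ε hε => ?_⟩
  obtain ⟨N, hN⟩ := hv ε hε
  exact (hu ⟨N, rfl⟩).trans hN

theorem automatic_continuity_general
    (X : Type*) [TopologicalSpace X]
    (V : Type*) [AddCommGroup V] [PartialOrder V] [IsOrderedAddMonoid V] [Module ℝ V]
    (harch : ∀ v w : V, 0 ≤ w → (∀ ε : ℝ, 0 < ε → v ≤ ε • w) → v ≤ 0)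
    (I : Set C(X, ℝ)) (hI : IsRieszIdeal I)
    (hone : (1 : C(X, ℝ)) ∈ I)
    (hmul : ∀ f g : C(X, ℝ), f ∈ I → g ∈ I → f * g ∈ I)
    (p : C(X, ℝ)) (hpI : p ∈ I) (hp0 : 0 ≤ p)
    (hproper : ∀ a b : ℝ, a ≤ b → IsCompact (p ⁻¹' Set.Icc a b))
    (Φ : C(X, ℝ) → V)
    (hΦadd : ∀ f g : C(X, ℝ), f ∈ I → g ∈ I → Φ (f + g) = Φ f + Φ g)
    (hΦsmul : ∀ (c : ℝ) (f : C(X, ℝ)), f ∈ I → Φ (c • f) = c • Φ f)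
    (hΦpos : ∀ f : C(X, ℝ), f ∈ I → 0 ≤ f → 0 ≤ Φ f) :
    ∀ f : ℕ → C(X, ℝ), (∀ k, f k ∈ I) → DecrPtwInfZero f →
      IsGLB (Set.range fun k => Φ (f k)) 0 := by
  intro f hfI hf
  set w : C(X, ℝ) := 1 + p * f 0
  have hwI : w ∈ I := hI.add_mem hone (hmul p (f 0) hpI (hfI 0))
  have hw0 : 0 ≤ w := add_nonneg zero_le_one (mul_nonneg hp0 (hf.nonneg 0))
  have hΦmono := monotoneOn_of_map_add_of_map_nonneg hI hΦadd hΦpos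
  refine isGLB_range_zero_of_forall_le_smul harch (hΦpos w hwI hw0)
    (fun k => hΦpos _ (hfI k) (hf.nonneg k)) fun ε hε => ?_
  obtain ⟨N, hN⟩ := hf.exists_le_smul_one_add_mul hp0 hproper hε
  refine ⟨N, ?_⟩
  rw [← hΦsmul ε w hwI]
  exact hΦmono (hfI N) (hI.smul_mem ε hwI) hN

theorem automatic_continuity
    (X : Type*) [TopologicalSpace X] [LocallyCompactSpace X] [T2Space X] [LindelofSpace X]
    (V : Type*) [AddCommGroup V] [PartialOrder V] [IsOrderedAddMonoid V] [Module ℝ V] [PosSMulStrictMono ℝ V]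
    (harch : ∀ v w : V, 0 ≤ w → (∀ ε : ℝ, 0 < ε → v ≤ ε • w) → v ≤ 0)
    (I : Set C(X, ℝ)) (hI : IsRieszIdeal I)
    (hone : (1 : C(X, ℝ)) ∈ I)
    (hmul : ∀ f g : C(X, ℝ), f ∈ I → g ∈ I → f * g ∈ I)
    (p : C(X, ℝ)) (hpI : p ∈ I) (hp0 : 0 ≤ p)
    (hproper : ∀ a b : ℝ, a ≤ b → IsCompact (p ⁻¹' Set.Icc a b))
    (Φ : C(X, ℝ) → V)
    (hΦadd : ∀ f g : C(X, ℝ), f ∈ I → g ∈ I → Φ (f + g) = Φ f + Φ g)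
    (hΦsmul : ∀ (c : ℝ) (f : C(X, ℝ)), f ∈ I → Φ (c • f) = c • Φ f)
    (hΦpos : ∀ f : C(X, ℝ), f ∈ I → 0 ≤ f → 0 ≤ Φ f) :
    ∀ f : ℕ → C(X, ℝ), (∀ k, f k ∈ I) → DecrPtwInfZero f →
      IsGLB (Set.range fun k => Φ (f k)) 0 :=
  automatic_continuity_general X V harch I hI hone hmul p hpI hp0 hproper Φ hΦadd hΦsmul hΦpos
end
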